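/- Let A be a finitely generated subalgebra of M([0,1]^n) that separates points of [0,1]^n and is distinct from M([0,1]^n). Then for every weighted triangulation (Δ,(a_1,…,a_u)) of [0,1]^n such that H_{Δ,a} is a basic set generating A, there exists j ∈ {1,…,u} with a_j ≠ 1. -/

import Mathlib

namespace MVPaper

/-- The unit `n`-cube `[0,1]^n` as a subset of `ℝ^n`. -/
def Cube (n : ℕ) : Set (Fin n → ℝ) := {x | ∀ i, 0 ≤ x i ∧ x i ≤ 1}

/-- An affine function `ℝ^n → ℝ` with integer coefficients. -/
def IsIntAffine {n : ℕ} (l : (Fin n → ℝ) → ℝ) : Prop :=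
  ∃ (b : ℤ) (m : Fin n → ℤ), ∀ x, l x = (b : ℝ) + ∑ j, (m j : ℝ) * x j

/-- An affine function `ℝ^n → ℝ` with arbitrary real coefficients. -/
def IsRealAffine {n : ℕ} (l : (Fin n → ℝ) → ℝ) : Prop :=
  ∃ (b : ℝ) (m : Fin n → ℝ), ∀ x, l x = b + ∑ j, m j * x j

/-- A McNaughton function on `[0,1]^n`: continuous, `[0,1]`-valued, and at every
point it agrees with one of finitely many integer affine functions. -/
def IsMcNaughton {n : ℕ} (f : Cube n → ℝ) : Prop :=
  Continuous f ∧ (∀ x, 0 ≤ f x ∧ f x ≤ 1) ∧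
    ∃ (t : ℕ) (l : Fin t → ((Fin n → ℝ) → ℝ)),
      (∀ i, IsIntAffine (l i)) ∧ ∀ x : Cube n, ∃ i, f x = l i (x : Fin n → ℝ)

/-- `M([0,1]^n)`: the set of all McNaughton functions on the `n`-cube. -/
def McNn (n : ℕ) : Set (Cube n → ℝ) := {f | IsMcNaughton f}

/-! ### Pointwise MV-operations on `[0,1]`-valued functions -/

def mvZero (α : Type*) : α → ℝ := fun _ => 0
def mvAdd {α : Type*} (f g : α → ℝ) : α → ℝ := fun x => min (f x + g x) 1
def mvNeg {α : Type*} (f : α → ℝ) : α → ℝ := fun x => 1 - f x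

/-- A set of functions containing the constant `0` and closed under the pointwise
MV-operations `⊕` and `¬`. -/
def MVClosed {α : Type*} (A : Set (α → ℝ)) : Prop :=
  mvZero α ∈ A ∧ (∀ f ∈ A, ∀ g ∈ A, mvAdd f g ∈ A) ∧ ∀ f ∈ A, mvNeg f ∈ A

/-- The subalgebra generated by `S`: the smallest set containing `S`, containing the
constant `0` and closed under the pointwise MV-operations. -/
def mvGen {α : Type*} (S : Set (α → ℝ)) : Set (α → ℝ) :=
  ⋂₀ {A : Set (α → ℝ) | MVClosed A ∧ S ⊆ A}

/-- A set of functions separates points. -/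
def Separates {α β : Type*} (S : Set (α → β)) : Prop :=
  ∀ x y : α, x ≠ y → ∃ f ∈ S, f x ≠ f y

/-! ### Abstract MV-algebras -/

/-- Signature of an MV-algebra: a constant `0`, a binary `⊕` and a unary `¬`. -/
structure MVStr (α : Type*) where
  zero : α
  add : α → α → α
  neg : α → α

/-- The MV-algebra axioms. -/
def MVStr.IsMV {α : Type*} (M : MVStr α) : Prop :=
  (∀ x y z, M.add (M.add x y) z = M.add x (M.add y z)) ∧
  (∀ x y, M.add x y = M.add y x) ∧
  (∀ x, M.add x M.zero = x) ∧
  (∀ x, M.neg (M.neg x) = x) ∧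
  (∀ x, M.add x (M.neg M.zero) = M.neg M.zero) ∧
  ∀ x y, M.add (M.neg (M.add (M.neg x) y)) y = M.add (M.neg (M.add (M.neg y) x)) x

/-- Homomorphism of abstract MV-algebras. -/
def IsMVHom {α β : Type*} (M : MVStr α) (N : MVStr β) (φ : α → β) : Prop :=
  φ M.zero = N.zero ∧ (∀ x y, φ (M.add x y) = N.add (φ x) (φ y)) ∧
    ∀ x, φ (M.neg x) = N.neg (φ x)

/-- Homomorphism from a set of `[0,1]`-valued functions (with the pointwise
MV-operations) into an abstract MV-algebra. -/
def IsMVHomOfSet {α γ : Type*} (B : Set (α → ℝ)) (Mc : MVStr γ) (h : B → γ) : Prop :=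
  (∀ f : B, (f : α → ℝ) = mvZero α → h f = Mc.zero) ∧
  (∀ f g k : B, (k : α → ℝ) = mvAdd (f : α → ℝ) (g : α → ℝ) → h k = Mc.add (h f) (h g)) ∧
  ∀ f g : B, (g : α → ℝ) = mvNeg (f : α → ℝ) → h g = Mc.neg (h f)

/-- Projectivity of an MV-algebra of `[0,1]`-valued functions: every homomorphism
into the quotient of a surjective homomorphism lifts. -/
def IsProjectiveMVSet {α : Type*} (A : Set (α → ℝ)) : Prop :=
  ∀ (β γ : Type*) (Mb : MVStr β) (Mc : MVStr γ), Mb.IsMV → Mc.IsMV →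
    ∀ ψ : β → γ, IsMVHom Mb Mc ψ → Function.Surjective ψ →
      ∀ φ : A → γ, IsMVHomOfSet A Mc φ →
        ∃ θ : A → β, IsMVHomOfSet A Mb θ ∧ ∀ f, ψ (θ f) = φ f

/-- `A` is an epi-subalgebra of the function MV-algebra `B`: any two MV-homomorphisms
out of `B` agreeing on `A` are equal. -/
def IsEpiSub {α : Type*} (A B : Set (α → ℝ)) : Prop :=
  A ⊆ B ∧
    ∀ (γ : Type*) (Mc : MVStr γ), Mc.IsMV →
      ∀ h g : B → γ, IsMVHomOfSet B Mc h → IsMVHomOfSet B Mc g →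
        (∀ f : B, (f : α → ℝ) ∈ A → h f = g f) → h = g

/-- MV-isomorphism between two sets of `[0,1]`-valued functions, each equipped with
the pointwise MV-operations: a bijection preserving `0`, `⊕` and `¬`. -/
def MVIsoSets {α β : Type*} (A : Set (α → ℝ)) (B : Set (β → ℝ)) : Prop :=
  ∃ φ : A → B, Function.Bijective φ ∧
    (∀ f : A, (f : α → ℝ) = mvZero α → (φ f : β → ℝ) = mvZero β) ∧
    (∀ f g k : A, (k : α → ℝ) = mvAdd (f : α → ℝ) (g : α → ℝ) →
      (φ k : β → ℝ) = mvAdd (φ f : β → ℝ) (φ g : β → ℝ)) ∧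
    ∀ f g : A, (g : α → ℝ) = mvNeg (f : α → ℝ) → (φ g : β → ℝ) = mvNeg (φ f : β → ℝ)

/-! ### Rational polyhedra and `M(P)` -/

def IsRatPoint {n : ℕ} (x : Fin n → ℝ) : Prop := ∀ i, ∃ q : ℚ, x i = (q : ℝ)

/-- A rational polyhedron in `[0,1]^n`: a finite union of convex hulls of finite
sets of rational points of the cube. -/
def IsRatPolyhedron {n : ℕ} (P : Set (Fin n → ℝ)) : Prop :=
  ∃ V : Finset (Finset (Fin n → ℝ)),
    (∀ S ∈ V, ∀ v ∈ S, v ∈ Cube n ∧ IsRatPoint v) ∧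
    P = ⋃ S ∈ V, convexHull ℝ (S : Set (Fin n → ℝ))

/-- Restriction of a function on the cube to a subset `P` of the cube. -/
def restrictCube {n : ℕ} {P : Set (Fin n → ℝ)} (hP : P ⊆ Cube n) (f : Cube n → ℝ) :
    P → ℝ :=
  fun x => f ⟨x.1, hP x.2⟩

/-- `M(P)`: restrictions to `P` of McNaughton functions on `[0,1]^n`. -/
def McNP {n : ℕ} {P : Set (Fin n → ℝ)} (hP : P ⊆ Cube n) : Set (P → ℝ) :=
  {f | ∃ g : Cube n → ℝ, IsMcNaughton g ∧ f = restrictCube hP g}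

/-! ### Z-maps and Z-homeomorphisms -/

def IsIntAffineVec {n k : ℕ} (L : (Fin n → ℝ) → (Fin k → ℝ)) : Prop :=
  ∀ j, IsIntAffine fun x => L x j

/-- A Z-map between subsets of cubes: continuous and at every point agreeing with
one of finitely many integer affine maps. -/
def IsZMap {n k : ℕ} (P : Set (Fin n → ℝ)) (Q : Set (Fin k → ℝ)) (η : P → Q) : Prop :=
  Continuous η ∧
    ∃ (t : ℕ) (L : Fin t → ((Fin n → ℝ) → (Fin k → ℝ))),
      (∀ i, IsIntAffineVec (L i)) ∧ ∀ x : P, ∃ i, (η x : Fin k → ℝ) = L i (x : Fin n → ℝ)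

/-- A Z-homeomorphism of `P` onto `Q`: a bijective Z-map whose inverse is a Z-map. -/
def IsZHomeo {n k : ℕ} (P : Set (Fin n → ℝ)) (Q : Set (Fin k → ℝ)) (η : P → Q) : Prop :=
  IsZMap P Q η ∧ Function.Bijective η ∧
    ∃ θ : Q → P, IsZMap Q P θ ∧ (∀ x, θ (η x) = x) ∧ ∀ y, η (θ y) = y

def ZHomeomorphic {n k : ℕ} (P : Set (Fin n → ℝ)) (Q : Set (Fin k → ℝ)) : Prop :=
  ∃ η : P → Q, IsZHomeo P Q η

/-- Corestriction of a map `η : P → Q` to its image (as a subset of `ℝ^k`). -/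
def corestrict {n k : ℕ} {P : Set (Fin n → ℝ)} {Q : Set (Fin k → ℝ)} (η : P → Q) :
    P → ↥(Subtype.val '' Set.range η) :=
  fun x => ⟨(η x : Fin k → ℝ), ⟨η x, ⟨x, rfl⟩, rfl⟩⟩

/-! ### Denominators, homogeneous correspondents, regular simplexes -/

/-- The denominator of a rational point: the least positive integer `d` such that
`d·x` has integer coordinates. -/
noncomputable def den {n : ℕ} (x : Fin n → ℝ) : ℕ :=
  sInf {d : ℕ | 0 < d ∧ ∀ i, ∃ c : ℤ, (d : ℝ) * x i = (c : ℝ)}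

/-- The homogeneous correspondent `x̃ = (den(x)·x, den(x)) ∈ ℤ^{n+1}` of a rational
point `x`. -/
noncomputable def tilde {n : ℕ} (x : Fin n → ℝ) : Fin (n + 1) → ℤ :=
  fun i => if h : (i : ℕ) < n then ⌊(den x : ℝ) * x ⟨(i : ℕ), h⟩⌋ else (den x : ℤ)

/-- A set of integer vectors extends to a basis of the free abelian group `ℤ^{n+1}`. -/
def ExtendsToBasis {n : ℕ} (S : Set (Fin (n + 1) → ℤ)) : Prop :=
  ∃ b : Module.Basis (Fin (n + 1)) ℤ (Fin (n + 1) → ℤ), S ⊆ Set.range b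

/-! ### Rational triangulations of the cube, weights, hats -/

/-- A rational triangulation of `[0,1]^n`, presented as the finite set of the vertex
sets of its simplexes. -/
def IsTriangulation {n : ℕ} (Δ : Finset (Finset (Fin n → ℝ))) : Prop :=
  letI := Classical.decEq (Fin n → ℝ)
  (∀ S ∈ Δ, S.Nonempty ∧ (∀ v ∈ S, v ∈ Cube n ∧ IsRatPoint v) ∧
      AffineIndependent ℝ (fun v : (S : Set (Fin n → ℝ)) => (v : Fin n → ℝ))) ∧
  (⋃ S ∈ Δ, convexHull ℝ (S : Set (Fin n → ℝ))) = Cube n ∧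
  (∀ S ∈ Δ, ∀ S' : Finset (Fin n → ℝ), S' ⊆ S → S'.Nonempty → S' ∈ Δ) ∧
  ∀ S ∈ Δ, ∀ T ∈ Δ,
    convexHull ℝ (S : Set (Fin n → ℝ)) ∩ convexHull ℝ (T : Set (Fin n → ℝ)) =
      convexHull ℝ ((S ∩ T : Finset (Fin n → ℝ)) : Set (Fin n → ℝ))

/-- The vertex set of a triangulation. -/
noncomputable def vertexSet {n : ℕ} (Δ : Finset (Finset (Fin n → ℝ))) :
    Finset (Fin n → ℝ) :=
  letI := Classical.decEq (Fin n → ℝ)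
  Δ.sup id

/-- A regular (unimodular) triangulation: all simplexes are regular. -/
def IsRegularTriangulation {n : ℕ} (Δ : Finset (Finset (Fin n → ℝ))) : Prop :=
  IsTriangulation Δ ∧ ∀ S ∈ Δ, ExtendsToBasis (tilde '' (S : Set (Fin n → ℝ)))

/-- A weighted triangulation: each vertex `v` carries a positive weight dividing
`den v`. -/
def IsWeighted {n : ℕ} (Δ : Finset (Finset (Fin n → ℝ))) (a : (Fin n → ℝ) → ℕ) : Prop :=
  IsTriangulation Δ ∧ ∀ v ∈ vertexSet Δ, 0 < a v ∧ a v ∣ den v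

/-- The hat of a weighted triangulation at the vertex `v`: `[0,1]`-valued, affine on
each simplex of `Δ`, with value `a v / den v` at `v` and `0` at all other vertices. -/
def IsHat {n : ℕ} (Δ : Finset (Finset (Fin n → ℝ))) (a : (Fin n → ℝ) → ℕ)
    (v : Fin n → ℝ) (h : Cube n → ℝ) : Prop :=
  (∀ x, 0 ≤ h x ∧ h x ≤ 1) ∧
  (∀ S ∈ Δ, ∃ l : (Fin n → ℝ) → ℝ, IsRealAffine l ∧
      ∀ x : Cube n, (x : Fin n → ℝ) ∈ convexHull ℝ (S : Set (Fin n → ℝ)) → h x = l x) ∧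
  (∀ x : Cube n, (x : Fin n → ℝ) = v → h x = (a v : ℝ) / (den v : ℝ)) ∧
  ∀ x : Cube n, (x : Fin n → ℝ) ∈ vertexSet Δ → (x : Fin n → ℝ) ≠ v → h x = 0

/-- A family assigning to each vertex of `Δ` its hat. -/
def IsHatFamily {n : ℕ} (Δ : Finset (Finset (Fin n → ℝ))) (a : (Fin n → ℝ) → ℕ)
    (h : (Fin n → ℝ) → Cube n → ℝ) : Prop :=
  ∀ v ∈ vertexSet Δ, IsHat Δ a v (h v)

/-- The set of hats `H_{Δ,a}` of a weighted triangulation. -/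
def hatSet {n : ℕ} (Δ : Finset (Finset (Fin n → ℝ)))
    (h : (Fin n → ℝ) → Cube n → ℝ) : Set (Cube n → ℝ) :=
  (fun v => h v) '' (vertexSet Δ : Set (Fin n → ℝ))

/-! ### Unital ℓ-groups of functions -/

/-- A set of real-valued functions which is a subgroup closed under pointwise
`⊔`, `⊓` and containing the constant function `1`. -/
def LClosed {α : Type*} (G : Set (α → ℝ)) : Prop :=
  (fun _ => (0 : ℝ)) ∈ G ∧ (∀ f ∈ G, ∀ g ∈ G, f + g ∈ G) ∧ (∀ f ∈ G, -f ∈ G) ∧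
    (∀ f ∈ G, ∀ g ∈ G, f ⊔ g ∈ G) ∧ (∀ f ∈ G, ∀ g ∈ G, f ⊓ g ∈ G) ∧
    (fun _ => (1 : ℝ)) ∈ G

/-- The unital ℓ-subgroup generated by `S`. -/
def lGen {α : Type*} (S : Set (α → ℝ)) : Set (α → ℝ) := ⋂₀ {G | LClosed G ∧ S ⊆ G}

/-- A continuous piecewise integer affine real-valued function on the cube. -/
def IsMcNGroupFun {n : ℕ} (f : Cube n → ℝ) : Prop :=
  Continuous f ∧ ∃ (t : ℕ) (l : Fin t → ((Fin n → ℝ) → ℝ)),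
    (∀ i, IsIntAffine (l i)) ∧ ∀ x : Cube n, ∃ i, f x = l i (x : Fin n → ℝ)

/-- `McN_group([0,1]^n)`. -/
def McNGroup (n : ℕ) : Set (Cube n → ℝ) := {f | IsMcNGroupFun f}

/-- Signature of a unital ℓ-group. -/
structure ULStr (α : Type*) where
  zero : α
  add : α → α → α
  neg : α → α
  sup : α → α → α
  inf : α → α → α
  unit : α

def ULStr.nsmul {α : Type*} (M : ULStr α) : ℕ → α → α
  | 0, _ => M.zero
  | k + 1, a => M.add a (M.nsmul k a)

/-- The unital ℓ-group axioms: abelian group, lattice, translation invariance,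
`u ≥ 0`, and `u` is a strong order unit. -/
def ULStr.IsUL {α : Type*} (M : ULStr α) : Prop :=
  (∀ a b c, M.add (M.add a b) c = M.add a (M.add b c)) ∧
  (∀ a b, M.add a b = M.add b a) ∧
  (∀ a, M.add a M.zero = a) ∧
  (∀ a, M.add a (M.neg a) = M.zero) ∧
  (∀ a b, M.sup a b = M.sup b a) ∧
  (∀ a b c, M.sup (M.sup a b) c = M.sup a (M.sup b c)) ∧
  (∀ a b, M.inf a b = M.inf b a) ∧
  (∀ a b c, M.inf (M.inf a b) c = M.inf a (M.inf b c)) ∧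
  (∀ a b, M.sup a (M.inf a b) = a) ∧
  (∀ a b, M.inf a (M.sup a b) = a) ∧
  (∀ a b c, M.sup a b = b → M.sup (M.add a c) (M.add b c) = M.add b c) ∧
  M.sup M.unit M.zero = M.unit ∧
  ∀ g, ∃ m : ℕ, 0 < m ∧ M.sup g (M.nsmul m M.unit) = M.nsmul m M.unit

/-- Homomorphism of abstract unital ℓ-groups: preserves `+`, `⊔`, `⊓` and the unit. -/
def IsULHom {α β : Type*} (M : ULStr α) (N : ULStr β) (φ : α → β) : Prop :=
  (∀ a b, φ (M.add a b) = N.add (φ a) (φ b)) ∧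
  (∀ a b, φ (M.sup a b) = N.sup (φ a) (φ b)) ∧
  (∀ a b, φ (M.inf a b) = N.inf (φ a) (φ b)) ∧
  φ M.unit = N.unit

/-- Homomorphism from a set of real-valued functions (pointwise operations, constant
`1` as unit) into an abstract unital ℓ-group. -/
def IsULHomOfSet {α γ : Type*} (G : Set (α → ℝ)) (N : ULStr γ) (φ : G → γ) : Prop :=
  (∀ f g k : G, (k : α → ℝ) = (f : α → ℝ) + (g : α → ℝ) → φ k = N.add (φ f) (φ g)) ∧
  (∀ f g k : G, (k : α → ℝ) = (f : α → ℝ) ⊔ (g : α → ℝ) → φ k = N.sup (φ f) (φ g)) ∧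
  (∀ f g k : G, (k : α → ℝ) = (f : α → ℝ) ⊓ (g : α → ℝ) → φ k = N.inf (φ f) (φ g)) ∧
  ∀ f : G, (f : α → ℝ) = (fun _ => (1 : ℝ)) → φ f = N.unit

/-- Projectivity of a unital ℓ-group of functions. -/
def IsProjectiveULSet {α : Type*} (G : Set (α → ℝ)) : Prop :=
  ∀ (β γ : Type*) (Mb : ULStr β) (Mc : ULStr γ), Mb.IsUL → Mc.IsUL →
    ∀ ψ : β → γ, IsULHom Mb Mc ψ → Function.Surjective ψ →
      ∀ φ : G → γ, IsULHomOfSet G Mc φ →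
        ∃ θ : G → β, IsULHomOfSet G Mb θ ∧ ∀ f, ψ (θ f) = φ f

/-- Unital ℓ-isomorphism between two sets of real-valued functions with the pointwise
operations and the constant `1` as unit. -/
def ULIsoSets {α β : Type*} (G : Set (α → ℝ)) (H : Set (β → ℝ)) : Prop :=
  ∃ φ : G → H, Function.Bijective φ ∧
    (∀ f g k : G, (k : α → ℝ) = (f : α → ℝ) + (g : α → ℝ) →
      (φ k : β → ℝ) = (φ f : β → ℝ) + (φ g : β → ℝ)) ∧
    (∀ f g k : G, (k : α → ℝ) = (f : α → ℝ) ⊔ (g : α → ℝ) →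
      (φ k : β → ℝ) = (φ f : β → ℝ) ⊔ (φ g : β → ℝ)) ∧
    (∀ f g k : G, (k : α → ℝ) = (f : α → ℝ) ⊓ (g : α → ℝ) →
      (φ k : β → ℝ) = (φ f : β → ℝ) ⊓ (φ g : β → ℝ)) ∧
    ∀ f : G, (f : α → ℝ) = (fun _ => (1 : ℝ)) → (φ f : β → ℝ) = fun _ => (1 : ℝ)

/-! ### MV-terms, their encoding and their evaluation -/

/-- MV-terms: formal expressions built from variables and `0` by `¬` and `⊕`. -/
inductive MVTerm : Type
  | zero : MVTerm
  | var : ℕ → MVTerm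
  | neg : MVTerm → MVTerm
  | add : MVTerm → MVTerm → MVTerm

/-- A term only uses the variables `X_1, …, X_n`. -/
def MVTerm.Good (n : ℕ) : MVTerm → Prop
  | .zero => True
  | .var i => i < n
  | .neg t => t.Good n
  | .add s t => s.Good n ∧ t.Good n

/-- The McNaughton function `τ̂ : [0,1]^n → [0,1]` associated with a term `τ`. -/
noncomputable def MVTerm.eval (n : ℕ) : MVTerm → Cube n → ℝ
  | .zero => fun _ => 0
  | .var i => fun x => if h : i < n then (x : Fin n → ℝ) ⟨i, h⟩ else 0
  | .neg t => fun x => 1 - MVTerm.eval n t x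
  | .add s t => fun x => min (MVTerm.eval n s x + MVTerm.eval n t x) 1

/-- A canonical computable encoding of MV-terms as natural numbers. -/
def MVTerm.code : MVTerm → ℕ
  | .zero => 0
  | .var i => 4 * i + 1
  | .neg t => 4 * t.code + 2
  | .add s t => 4 * Nat.pair s.code t.code + 3

/-- Encoding of a finite list of MV-terms. -/
def encodeTerms (l : List MVTerm) : ℕ := Encodable.encode (l.map MVTerm.code)

/-- Encoding of an instance `(n, [τ_1, …, τ_k])`. -/
def encodeInstance (n : ℕ) (l : List MVTerm) : ℕ := Nat.pair n (encodeTerms l)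

/-- Encoding of an instance `(n, [τ_1, …, τ_k], [σ_1, …, σ_l])`. -/
def encodeInstance2 (n : ℕ) (l₁ l₂ : List MVTerm) : ℕ :=
  Nat.pair n (Nat.pair (encodeTerms l₁) (encodeTerms l₂))

/-- The set of McNaughton functions `{τ̂_1, …, τ̂_k}` of a list of terms. -/
def evalSet (n : ℕ) (l : List MVTerm) : Set (Cube n → ℝ) :=
  {f | ∃ τ ∈ l, f = MVTerm.eval n τ}

/-- The zeroset `Z_σ = σ̂⁻¹(0) ⊆ [0,1]^k` of the term `σ`. -/
def Zset (k : ℕ) (σ : MVTerm) : Set (Fin k → ℝ) :=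
  {x | ∃ h : x ∈ Cube k, MVTerm.eval k σ ⟨x, h⟩ = 0}

theorem Zset_subset_cube (k : ℕ) (σ : MVTerm) : Zset k σ ⊆ Cube k :=
  fun _ hx => hx.elim fun h _ => h

/-- `M(Z_σ)`: restrictions to the zeroset of `σ̂` of McNaughton functions. -/
def McNZ (k : ℕ) (σ : MVTerm) : Set ((Zset k σ) → ℝ) := McNP (Zset_subset_cube k σ)

/-!
If all weights are `1`, the hat `h_v` takes the value `1 / den v` at `v`, so on every simplex
`x_k = ∑_v (den v · v_k) · h_v(x)`, a sum with natural coefficients that never exceeds `1`; it is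
therefore an iterated `⊕` of hats, and the hats generate the coordinate functions. These generate
all of `M([0,1]^n)` (McNaughton): clamps to `[0,1]` of integer affine functions are built up one
coefficient at a time from `clamp (p + q) = (clamp p ⊕ q) ⊙ clamp (p + 1)` for `q ∈ [0,1]`, and a
McNaughton function `f` with pieces `l_j` is `max_y min {clamp l_j | f y ≤ l_j y}`, because on the
segment from `y` to `x` some piece lies above `f` at `y` and below `f` at `x`. Hence `A` would be
all of `M([0,1]^n)`.
-/

structure IsMVSubalgebra {α : Type*} (B : Set (α → ℝ)) : Prop where
  closed : MVClosed B
  bounds : ∀ f ∈ B, ∀ x, 0 ≤ f x ∧ f x ≤ 1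

theorem MVClosed.isMVSubalgebra_inter {α : Type*} {B : Set (α → ℝ)} (hB : MVClosed B) :
    IsMVSubalgebra (B ∩ {f | ∀ x, 0 ≤ f x ∧ f x ≤ 1}) where
  closed := by
    refine ⟨⟨hB.1, fun _ => by simp [mvZero]⟩, fun f hf g hg => ⟨hB.2.1 f hf.1 g hg.1, ?_⟩,
      fun f hf => ⟨hB.2.2 f hf.1, ?_⟩⟩
    · intro x
      have := hf.2 x
      have := hg.2 x
      exact ⟨le_min (by linarith) zero_le_one, min_le_right _ _⟩
    · intro x
      have := hf.2 x
      exact ⟨by simp only [mvNeg]; linarith, by simp only [mvNeg]; linarith⟩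
  bounds := fun _ hf => hf.2

namespace IsMVSubalgebra

variable {α : Type*} {B : Set (α → ℝ)} {f g : α → ℝ}

theorem zero_mem (hB : IsMVSubalgebra B) : (fun _ => (0 : ℝ)) ∈ B := hB.closed.1

theorem add_mem (hB : IsMVSubalgebra B) (hf : f ∈ B) (hg : g ∈ B) :
    (fun x => min (f x + g x) 1) ∈ B :=
  hB.closed.2.1 f hf g hg

theorem neg_mem (hB : IsMVSubalgebra B) (hf : f ∈ B) : (fun x => 1 - f x) ∈ B :=
  hB.closed.2.2 f hf

theorem one_mem (hB : IsMVSubalgebra B) : (fun _ => (1 : ℝ)) ∈ B := by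
  simpa using hB.neg_mem hB.zero_mem

/-- The Łukasiewicz product `f ⊙ g = ¬(¬f ⊕ ¬g)`. -/
theorem odot_mem (hB : IsMVSubalgebra B) (hf : f ∈ B) (hg : g ∈ B) :
    (fun x => max (f x + g x - 1) 0) ∈ B := by
  convert hB.neg_mem (hB.add_mem (hB.neg_mem hf) (hB.neg_mem hg)) using 2 with x
  rw [← max_sub_sub_left]
  congr 1 <;> ring

theorem sup_mem (hB : IsMVSubalgebra B) (hf : f ∈ B) (hg : g ∈ B) : f ⊔ g ∈ B := by
  -- `f ∨ g = (f ⊙ ¬g) ⊕ g`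
  convert hB.add_mem (hB.odot_mem hf (hB.neg_mem hg)) hg using 2 with x
  have := hB.bounds g hg x
  have := hB.bounds f hf x
  simp only [Pi.sup_apply]
  rcases le_total (f x) (g x) with h | h
  · rw [max_eq_right h, max_eq_right (by linarith), min_eq_left (by linarith)]; ring
  · rw [max_eq_left h, max_eq_left (by linarith), min_eq_left (by linarith)]; ring

theorem inf_mem (hB : IsMVSubalgebra B) (hf : f ∈ B) (hg : g ∈ B) : f ⊓ g ∈ B := by
  convert hB.neg_mem (hB.sup_mem (hB.neg_mem hf) (hB.neg_mem hg)) using 2 with x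
  simp only [Pi.sup_apply, Pi.inf_apply, ← min_sub_sub_left, sub_sub_cancel]

theorem supClosed (hB : IsMVSubalgebra B) : SupClosed B := fun _ hf _ hg => hB.sup_mem hf hg

theorem infClosed (hB : IsMVSubalgebra B) : InfClosed B := fun _ hf _ hg => hB.inf_mem hf hg

theorem add_mem_of_le_one (hB : IsMVSubalgebra B) (hf : f ∈ B) (hg : g ∈ B)
    (hle : ∀ x, f x + g x ≤ 1) : f + g ∈ B := by
  convert hB.add_mem hf hg using 2 with x
  exact (min_eq_left (hle x)).symm

theorem sum_mem (hB : IsMVSubalgebra B) {ι : Type*} {s : Finset ι} {F : ι → α → ℝ}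
    (hF : ∀ i ∈ s, F i ∈ B) (hle : ∀ x, ∑ i ∈ s, F i x ≤ 1) : ∑ i ∈ s, F i ∈ B := by
  classical
  induction s using Finset.induction_on with
  | empty => exact hB.zero_mem
  | insert i s hi ih =>
    simp only [Finset.sum_insert hi] at hle ⊢
    have hFi := hF i (Finset.mem_insert_self i s)
    refine hB.add_mem_of_le_one hFi (ih (fun j hj => hF j (Finset.mem_insert_of_mem hj))
      fun x => by linarith [hle x, (hB.bounds _ hFi x).1]) (by simpa using hle)

theorem nsmul_mem (hB : IsMVSubalgebra B) (hf : f ∈ B) (c : ℕ) (hle : ∀ x, c * f x ≤ 1) :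
    (fun x => c * f x) ∈ B := by
  convert hB.sum_mem (s := Finset.range c) (fun _ _ => hf) (by simpa using hle) using 1
  ext x
  simp

theorem sum_nsmul_mem (hB : IsMVSubalgebra B) {ι : Type*} {s : Finset ι} {F : ι → α → ℝ}
    (c : ι → ℕ) (hF : ∀ i ∈ s, F i ∈ B) (hle : ∀ x, ∑ i ∈ s, c i * F i x ≤ 1) :
    (fun x => ∑ i ∈ s, c i * F i x) ∈ B := by
  have hnonneg : ∀ x, ∀ i ∈ s, 0 ≤ c i * F i x :=
    fun x i hi => mul_nonneg (Nat.cast_nonneg _) (hB.bounds _ (hF i hi) x).1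
  have hmem : ∀ i ∈ s, (fun x => (c i : ℝ) * F i x) ∈ B := fun i hi =>
    hB.nsmul_mem (hF i hi) (c i) fun x => (Finset.single_le_sum (hnonneg x) hi).trans (hle x)
  convert hB.sum_mem hmem hle using 1
  ext x
  simp

end IsMVSubalgebra

def clampUnit (t : ℝ) : ℝ := min (max t 0) 1

theorem clampUnit_of_mem_Icc {t : ℝ} (h0 : 0 ≤ t) (h1 : t ≤ 1) : clampUnit t = t := by
  rw [clampUnit, max_eq_left h0, min_eq_left h1]

theorem clampUnit_mono : Monotone clampUnit :=
  fun _ _ h => min_le_min_right _ (max_le_max_right _ h)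

theorem clampUnit_intCast (b : ℤ) : clampUnit b = if 0 < b then 1 else 0 := by
  unfold clampUnit
  split_ifs with hb
  · have : (1 : ℝ) ≤ b := by exact_mod_cast hb
    rw [max_eq_left (by linarith), min_eq_right this]
  · have : (b : ℝ) ≤ 0 := by exact_mod_cast not_lt.mp hb
    rw [max_eq_right this, min_eq_left zero_le_one]

theorem clampUnit_add_eq {q : ℝ} (p : ℝ) (hq0 : 0 ≤ q) (hq1 : q ≤ 1) :
    clampUnit (p + q) = max (min (clampUnit p + q) 1 + clampUnit (p + 1) - 1) 0 := by
  unfold clampUnit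
  rcases le_total p (-1) with h1 | h1
  · rw [max_eq_right (by linarith : p ≤ 0), max_eq_right (by linarith : p + 1 ≤ 0),
      max_eq_right (by linarith : p + q ≤ 0), min_eq_left (zero_le_one' ℝ), zero_add,
      min_eq_left hq1, add_zero, max_eq_right (by linarith)]
  rcases le_total p 0 with h2 | h2
  · rw [max_eq_right h2, max_eq_left (by linarith : 0 ≤ p + 1),
      min_eq_left (by linarith : p + 1 ≤ 1), min_eq_left (zero_le_one' ℝ), zero_add,
      min_eq_left hq1, min_eq_left (max_le (by linarith) zero_le_one)]
    congr 1
    ring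
  rw [max_eq_left h2, max_eq_left (by linarith : 0 ≤ p + 1), max_eq_left (by linarith : 0 ≤ p + q),
    min_eq_right (by linarith : 1 ≤ p + 1), add_sub_cancel_right]
  rcases le_total p 1 with h3 | h3
  · rw [min_eq_left h3, max_eq_left (le_min (by linarith) zero_le_one)]
  · rw [min_eq_right h3, min_eq_right (by linarith : 1 ≤ 1 + q),
      min_eq_right (by linarith : 1 ≤ p + q), max_eq_left zero_le_one]

def ShiftClampsMem {α : Type*} (B : Set (α → ℝ)) (p : α → ℝ) : Prop :=
  ∀ c : ℤ, (fun x => clampUnit (p x + c)) ∈ B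

namespace ShiftClampsMem

variable {α : Type*} {B : Set (α → ℝ)} {p q : α → ℝ}

theorem const (hB : IsMVSubalgebra B) (b : ℤ) : ShiftClampsMem B (fun _ => b) := by
  intro c
  have hclamp : clampUnit ((b : ℝ) + c) = if 0 < b + c then 1 else 0 := by
    rw [← clampUnit_intCast]
    push_cast
    rfl
  simp only [hclamp]
  split_ifs
  exacts [hB.one_mem, hB.zero_mem]

theorem add (hB : IsMVSubalgebra B) (hp : ShiftClampsMem B p) (hq : q ∈ B) :
    ShiftClampsMem B (fun x => p x + q x) := by
  intro c
  convert hB.odot_mem (hB.add_mem (hp c) hq) (hp (c + 1)) using 2 with x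
  obtain ⟨hq0, hq1⟩ := hB.bounds q hq x
  rw [add_right_comm, clampUnit_add_eq _ hq0 hq1]
  push_cast
  ring_nf

theorem sub (hB : IsMVSubalgebra B) (hp : ShiftClampsMem B p) (hq : q ∈ B) :
    ShiftClampsMem B (fun x => p x - q x) := by
  intro c
  convert hp.add hB (hB.neg_mem hq) (c - 1) using 3 with x
  push_cast
  ring

theorem add_intMul (hB : IsMVSubalgebra B) (hp : ShiftClampsMem B p) (hq : q ∈ B) (m : ℤ) :
    ShiftClampsMem B (fun x => p x + m * q x) := by
  induction m using Int.induction_on with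
  | zero => simpa using hp
  | succ m ih =>
    convert ih.add hB hq using 2 with x
    push_cast
    ring
  | pred m ih =>
    convert ih.sub hB hq using 2 with x
    push_cast
    ring

end ShiftClampsMem

theorem IsMVSubalgebra.shiftClampsMem_intCombination {α ι : Type*} {B : Set (α → ℝ)}
    (hB : IsMVSubalgebra B) {q : ι → α → ℝ} (hq : ∀ i, q i ∈ B) (b : ℤ) (m : ι → ℤ)
    (s : Finset ι) : ShiftClampsMem B (fun x => b + ∑ i ∈ s, m i * q i x) := by
  classical
  induction s using Finset.induction_on with
  | empty => simpa using ShiftClampsMem.const hB b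
  | insert i s hi ih =>
    convert ih.add_intMul hB (hq i) (m i) using 2 with x
    rw [Finset.sum_insert hi]
    ring

theorem IsMVSubalgebra.clampUnit_comp_mem {n : ℕ} {B : Set (Cube n → ℝ)}
    (hB : IsMVSubalgebra B) (hcoord : ∀ k : Fin n, (fun x : Cube n => (x : Fin n → ℝ) k) ∈ B)
    {l : (Fin n → ℝ) → ℝ} (hl : IsIntAffine l) : (fun x : Cube n => clampUnit (l x)) ∈ B := by
  obtain ⟨b, m, hlbm⟩ := hl
  simpa [hlbm] using hB.shiftClampsMem_intCombination hcoord b m Finset.univ 0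

theorem exists_last_eq_of_lt {F g : ℝ → ℝ} (hF : Continuous F) (hg : Continuous g) {u v : ℝ}
    (huv : u ≤ v) (hu : F u = g u) (hv : F v < g v) :
    ∃ z ∈ Set.Ico u v, F z = g z ∧ ∀ τ ∈ Set.Ioc z v, F τ < g τ := by
  set Z := Set.Icc u v ∩ {τ | F τ = g τ}
  have hZ : IsCompact Z := isCompact_Icc.inter_right (isClosed_eq hF hg)
  obtain ⟨z, ⟨hzuv, hz⟩, hzmax⟩ := hZ.exists_isGreatest ⟨u, ⟨le_rfl, huv⟩, hu⟩
  have hzv : z ≠ v := by rintro rfl; exact hv.ne hz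
  refine ⟨z, ⟨hzuv.1, lt_of_le_of_ne hzuv.2 hzv⟩, hz, fun τ hτ => ?_⟩
  by_contra! hτle
  obtain ⟨ρ, hρ, hρ0⟩ : ∃ ρ ∈ Set.Icc τ v, F ρ - g ρ = 0 :=
    intermediate_value_Icc' hτ.2 (hF.sub hg).continuousOn
      ⟨by simp only [Pi.sub_apply]; linarith, by simp only [Pi.sub_apply]; linarith⟩
  have : ρ ≤ z := hzmax ⟨⟨hzuv.1.trans (hτ.1.le.trans hρ.1), hρ.2⟩, sub_eq_zero.mp hρ0⟩
  linarith [hτ.1, hρ.1]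

theorem exists_piece_ge_left_le_right {ι : Type*} [DecidableEq ι] (c d : ι → ℝ) {F : ℝ → ℝ}
    (hF : Continuous F) (A : Finset ι) {u v : ℝ} (huv : u ≤ v)
    (hsel : ∀ τ ∈ Set.Icc u v, ∃ j ∈ A, F τ = c j + d j * τ) :
    ∃ j ∈ A, F u ≤ c j + d j * u ∧ c j + d j * v ≤ F v := by
  induction A using Finset.strongInduction generalizing u with
  | H A ih =>
  obtain ⟨j₀, hj₀A, hj₀⟩ := hsel u ⟨le_rfl, huv⟩
  by_cases hv : c j₀ + d j₀ * v ≤ F v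
  · exact ⟨j₀, hj₀A, hj₀.le, hv⟩
  have hg₀ : Continuous fun τ => c j₀ + d j₀ * τ := by fun_prop
  obtain ⟨z, hz, hFz, hlt⟩ := exists_last_eq_of_lt hF hg₀ huv hj₀ (not_le.mp hv)
  -- on `(z, v]` the piece `j₀` is never active, so the others cover `(z, v]`, hence `[z, v]`
  have hcover : ∀ τ ∈ Set.Icc z v, ∃ j ∈ A.erase j₀, F τ = c j + d j * τ := by
    have hclosed : IsClosed (⋃ j ∈ A.erase j₀, {τ | F τ = c j + d j * τ}) :=
      (A.erase j₀).finite_toSet.isClosed_biUnion fun j _ => isClosed_eq hF (by fun_prop)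
    have hIoc : Set.Ioc z v ⊆ ⋃ j ∈ A.erase j₀, {τ | F τ = c j + d j * τ} := by
      intro τ hτ
      obtain ⟨j, hjA, hj⟩ := hsel τ ⟨hz.1.trans hτ.1.le, hτ.2⟩
      have hjj₀ : j ≠ j₀ := by rintro rfl; exact (hlt τ hτ).ne hj
      exact Set.mem_biUnion (Finset.mem_erase.mpr ⟨hjj₀, hjA⟩) hj
    intro τ hτ
    rw [← closure_Ioc hz.2.ne] at hτ
    simpa using hclosed.closure_subset_iff.mpr hIoc hτ
  obtain ⟨j₁, hj₁A, hj₁z, hj₁v⟩ := ih _ (Finset.erase_ssubset hj₀A) hz.2.le hcover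
  refine ⟨j₁, Finset.mem_of_mem_erase hj₁A, ?_, hj₁v⟩
  -- piece `j₁` minus piece `j₀` is `≥ 0` at `z` and `< 0` at `v > z`, hence `≥ 0` at `u ≤ z`
  have hslope : d j₁ - d j₀ < 0 := by nlinarith [hz.2, not_le.mp hv]
  nlinarith [hz.1]

theorem IsIntAffine.isRealAffine {n : ℕ} {l : (Fin n → ℝ) → ℝ} (hl : IsIntAffine l) :
    IsRealAffine l := by
  obtain ⟨b, m, h⟩ := hl
  exact ⟨b, fun j => m j, h⟩

theorem IsRealAffine.apply_lineMap {n : ℕ} {l : (Fin n → ℝ) → ℝ} (hl : IsRealAffine l)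
    (y x : Fin n → ℝ) (τ : ℝ) : l (AffineMap.lineMap y x τ) = l y + (l x - l y) * τ := by
  obtain ⟨b, m, h⟩ := hl
  have hsplit : ∀ j, m j * ((1 - τ) * y j + τ * x j) = m j * y j + (m j * x j - m j * y j) * τ :=
    fun j => by ring
  simp only [h, AffineMap.lineMap_apply_module, Pi.add_apply, Pi.smul_apply, smul_eq_mul, hsplit,
    Finset.sum_add_distrib, ← Finset.sum_mul, Finset.sum_sub_distrib]
  ring

theorem exists_piece_ge_le {n : ℕ} {ι : Type*} [Fintype ι] {s : Set (Fin n → ℝ)}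
    (hs : Convex ℝ s) {f : s → ℝ} (hf : Continuous f) {l : ι → (Fin n → ℝ) → ℝ}
    (hl : ∀ j, IsRealAffine (l j)) (hsel : ∀ x : s, ∃ j, f x = l j x) (x y : s) :
    ∃ j, f y ≤ l j y ∧ l j x ≤ f x := by
  classical
  let γ : ℝ → s := fun τ =>
    ⟨AffineMap.lineMap (y : Fin n → ℝ) x (Set.projIcc 0 1 zero_le_one τ : ℝ),
      hs.lineMap_mem y.2 x.2 (Set.projIcc 0 1 zero_le_one τ).2⟩
  have hγ : Continuous γ := by
    refine Continuous.subtype_mk ?_ _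
    exact (AffineMap.lineMap_continuous).comp (continuous_subtype_val.comp continuous_projIcc)
  have hγ_apply : ∀ τ ∈ Set.Icc (0 : ℝ) 1,
      (γ τ : Fin n → ℝ) = AffineMap.lineMap (y : Fin n → ℝ) x τ := by
    intro τ hτ
    simp [γ, Set.projIcc_of_mem _ hτ]
  obtain ⟨j, -, hj0, hj1⟩ := exists_piece_ge_left_le_right (fun j => l j y)
    (fun j => l j x - l j y) (hf.comp hγ) Finset.univ zero_le_one fun τ hτ => by
      obtain ⟨j, hj⟩ := hsel (γ τ)
      exact ⟨j, Finset.mem_univ j, by simpa [hγ_apply τ hτ, (hl j).apply_lineMap] using hj⟩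
  have hγ0 : γ 0 = y := Subtype.ext (by simpa using hγ_apply 0 (by simp))
  have hγ1 : γ 1 = x := Subtype.ext (by simpa using hγ_apply 1 (by simp))
  refine ⟨j, ?_, ?_⟩
  · simpa [hγ0] using hj0
  · simpa [hγ1] using hj1

/-- `f` is the maximum over `y` of the minimum of the pieces lying above `f` at `y`. -/
theorem IsMVSubalgebra.mem_of_forall_exists_ge_le {α ι : Type*} [Fintype ι] {B : Set (α → ℝ)}
    (hB : IsMVSubalgebra B) {p : ι → α → ℝ} (hp : ∀ j, p j ∈ B) {f : α → ℝ}
    (hsel : ∀ x, ∃ j, f x = p j x) (hcross : ∀ x y, ∃ j, f y ≤ p j y ∧ p j x ≤ f x) :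
    f ∈ B := by
  classical
  rcases isEmpty_or_nonempty α with _ | ⟨⟨x₀⟩⟩
  · convert hB.zero_mem
  let J : α → Finset ι := fun y => Finset.univ.filter fun j => f y ≤ p j y
  have hJ : ∀ y, (J y).Nonempty := fun y => by
    obtain ⟨j, hj⟩ := hsel y
    exact ⟨j, by simp [J, hj]⟩
  let G : Finset ι → α → ℝ := fun S => if h : S.Nonempty then S.inf' h p else 0
  have hGJ : ∀ y, G (J y) = (J y).inf' (hJ y) p := fun y => dif_pos (hJ y)
  let 𝒮 : Finset (Finset ι) := Finset.univ.filter fun S => ∃ y, J y = S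
  have h𝒮 : ∀ y, J y ∈ 𝒮 := fun y => by simp [𝒮]
  have h𝒮ne : 𝒮.Nonempty := ⟨_, h𝒮 x₀⟩
  have hmem : 𝒮.sup' h𝒮ne G ∈ B := by
    refine hB.supClosed.finsetSup'_mem _ fun S _ => ?_
    by_cases hS : S.Nonempty
    · simpa [G, hS] using hB.infClosed.finsetInf'_mem hS fun j _ => hp j
    · simp only [G, hS, dite_false]
      exact hB.zero_mem
  convert hmem using 1
  funext x
  rw [Finset.sup'_apply]
  apply le_antisymm
  · refine le_trans ?_ (Finset.le_sup' (fun S => G S x) (h𝒮 x))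
    rw [hGJ, Finset.inf'_apply]
    exact Finset.le_inf' _ _ fun j hj => (Finset.mem_filter.mp hj).2
  · refine Finset.sup'_le _ _ fun S hS => ?_
    obtain ⟨y, rfl⟩ := (Finset.mem_filter.mp hS).2
    obtain ⟨j, hjy, hjx⟩ := hcross x y
    rw [hGJ, Finset.inf'_apply]
    exact (Finset.inf'_le _ (by simpa [J] using hjy)).trans hjx

theorem convex_cube (n : ℕ) : Convex ℝ (Cube n) := by
  have hIcc : Cube n = Set.Icc 0 1 := by
    ext x
    simp [Cube, Pi.le_def, forall_and]
  exact hIcc ▸ convex_Icc 0 1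

theorem IsMVSubalgebra.mem_of_isMcNaughton {n : ℕ} {B : Set (Cube n → ℝ)}
    (hB : IsMVSubalgebra B) (hcoord : ∀ k : Fin n, (fun x : Cube n => (x : Fin n → ℝ) k) ∈ B)
    {f : Cube n → ℝ} (hf : IsMcNaughton f) : f ∈ B := by
  obtain ⟨hcont, hbounds, t, l, hl, hsel⟩ := hf
  have hclamp : ∀ x, clampUnit (f x) = f x :=
    fun x => clampUnit_of_mem_Icc (hbounds x).1 (hbounds x).2
  refine hB.mem_of_forall_exists_ge_le (p := fun j x => clampUnit (l j x))
    (fun j => hB.clampUnit_comp_mem hcoord (hl j)) (fun x => ?_) fun x y => ?_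
  · obtain ⟨j, hj⟩ := hsel x
    exact ⟨j, by rw [← hj, hclamp]⟩
  · obtain ⟨j, hjy, hjx⟩ :=
      exists_piece_ge_le (convex_cube n) hcont (fun j => (hl j).isRealAffine) hsel x y
    exact ⟨j, (hclamp y).symm.le.trans (clampUnit_mono hjy),
      (clampUnit_mono hjx).trans (hclamp x).le⟩

theorem IsRatPoint.den_spec {n : ℕ} {v : Fin n → ℝ} (hv : IsRatPoint v) :
    0 < den v ∧ ∀ i, ∃ c : ℤ, (den v : ℝ) * v i = c := by
  refine Nat.sInf_mem (s := {d : ℕ | 0 < d ∧ ∀ i, ∃ c : ℤ, (d : ℝ) * v i = c}) ?_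
  choose q hq using hv
  refine ⟨∏ i, (q i).den, Finset.prod_pos fun i _ => (q i).pos, fun i => ?_⟩
  obtain ⟨k, hk⟩ := Finset.dvd_prod_of_mem (fun i => (q i).den) (Finset.mem_univ i)
  refine ⟨(q i).num * k, ?_⟩
  have hden : ((q i).den : ℝ) ≠ 0 := by exact_mod_cast (q i).den_nz
  rw [hq i, hk, Rat.cast_def]
  push_cast
  field_simp

theorem mem_vertexSet {n : ℕ} {Δ : Finset (Finset (Fin n → ℝ))} {v : Fin n → ℝ} :
    v ∈ vertexSet Δ ↔ ∃ S ∈ Δ, v ∈ S := by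
  simp [vertexSet, Finset.mem_sup]

theorem IsRealAffine.apply_sum_smul {n : ℕ} {l : (Fin n → ℝ) → ℝ} (hl : IsRealAffine l)
    {S : Finset (Fin n → ℝ)} {w : (Fin n → ℝ) → ℝ} (hw : ∑ y ∈ S, w y = 1) :
    l (∑ y ∈ S, w y • y) = ∑ y ∈ S, w y * l y := by
  obtain ⟨b, m, h⟩ := hl
  simp only [h, Finset.sum_apply, Pi.smul_apply, smul_eq_mul, mul_add, Finset.sum_add_distrib,
    ← Finset.sum_mul, hw, one_mul, Finset.mul_sum]
  rw [Finset.sum_comm]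
  congr 1
  exact Finset.sum_congr rfl fun _ _ => Finset.sum_congr rfl fun _ _ => by ring

theorem IsHat.apply_eq_of_sum_smul {n : ℕ} [DecidableEq (Fin n → ℝ)]
    {Δ : Finset (Finset (Fin n → ℝ))} {a : (Fin n → ℝ) → ℕ} {v : Fin n → ℝ}
    {h : Cube n → ℝ} (hh : IsHat Δ a v h) (hT : IsTriangulation Δ) {S : Finset (Fin n → ℝ)}
    (hS : S ∈ Δ) {w : (Fin n → ℝ) → ℝ} (hw0 : ∀ y ∈ S, 0 ≤ w y) (hw1 : ∑ y ∈ S, w y = 1)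
    {x : Cube n} (hx : ∑ y ∈ S, w y • y = x) :
    h x = if v ∈ S then w v * (a v / den v) else 0 := by
  obtain ⟨l, hl, hhl⟩ := hh.2.1 S hS
  have hvert : ∀ y ∈ S, l y = if y = v then (a v / den v : ℝ) else 0 := by
    intro y hy
    have hyC : y ∈ Cube n := ((hT.1 S hS).2.1 y hy).1
    rw [← hhl ⟨y, hyC⟩ (subset_convexHull ℝ _ hy)]
    split_ifs with hyv
    · exact hh.2.2.1 ⟨y, hyC⟩ hyv
    · exact hh.2.2.2 ⟨y, hyC⟩ (mem_vertexSet.mpr ⟨S, hS, hy⟩) hyv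
  rw [hhl x (Finset.mem_convexHull'.mpr ⟨w, hw0, hw1, hx⟩), ← hx, hl.apply_sum_smul hw1,
    Finset.sum_congr rfl fun y hy => by rw [hvert y hy, mul_ite, mul_zero],
    Finset.sum_ite_eq']

theorem IsHatFamily.sum_smul_eq {n : ℕ} {Δ : Finset (Finset (Fin n → ℝ))}
    {a : (Fin n → ℝ) → ℕ} {h : (Fin n → ℝ) → Cube n → ℝ} (hH : IsHatFamily Δ a h)
    (hW : IsWeighted Δ a) (x : Cube n) :
    ∑ v ∈ vertexSet Δ, ((den v / a v : ℝ) * h v x) • v = x := by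
  classical
  have hxΔ : (x : Fin n → ℝ) ∈ ⋃ S ∈ Δ, convexHull ℝ (S : Set (Fin n → ℝ)) := by
    rw [hW.1.2.1]
    exact x.2
  obtain ⟨S, hS, hxS⟩ := Set.mem_iUnion₂.mp hxΔ
  obtain ⟨w, hw0, hw1, hx⟩ := Finset.mem_convexHull'.mp hxS
  have hSV : S ⊆ vertexSet Δ := fun v hv => mem_vertexSet.mpr ⟨S, hS, hv⟩
  have hterm : ∀ v ∈ vertexSet Δ,
      ((den v / a v : ℝ) * h v x) • v = if v ∈ S then w v • v else 0 := by
    intro v hv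
    rw [(hH v hv).apply_eq_of_sum_smul hW.1 hS hw0 hw1 hx]
    split_ifs with hvS
    · have hden : (den v : ℝ) ≠ 0 :=
        Nat.cast_ne_zero.mpr ((((hW.1.1 S hS).2.1 v hvS).2.den_spec).1.ne')
      have ha : (a v : ℝ) ≠ 0 := Nat.cast_ne_zero.mpr (hW.2 v hv).1.ne'
      congr 1
      field_simp
    · simp
  rw [Finset.sum_congr rfl hterm, Finset.sum_ite_mem, Finset.inter_eq_right.mpr hSV, hx]

theorem IsMVSubalgebra.coord_mem_of_hats_mem {n : ℕ} {B : Set (Cube n → ℝ)}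
    (hB : IsMVSubalgebra B) {Δ : Finset (Finset (Fin n → ℝ))} {a : (Fin n → ℝ) → ℕ}
    {h : (Fin n → ℝ) → Cube n → ℝ} (hW : IsWeighted Δ a) (hH : IsHatFamily Δ a h)
    (hone : ∀ v ∈ vertexSet Δ, a v = 1) (hhB : ∀ v ∈ vertexSet Δ, h v ∈ B) (k : Fin n) :
    (fun x : Cube n => (x : Fin n → ℝ) k) ∈ B := by
  have hcoeff : ∀ v ∈ vertexSet Δ, ∃ c : ℕ, (c : ℝ) = den v * v k := by
    intro v hv
    obtain ⟨S, hS, hvS⟩ := mem_vertexSet.mp hv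
    obtain ⟨hvC, hvQ⟩ := (hW.1.1 S hS).2.1 v hvS
    obtain ⟨c, hc⟩ := hvQ.den_spec.2 k
    have hc0 : (0 : ℝ) ≤ c := hc ▸ mul_nonneg (Nat.cast_nonneg _) (hvC k).1
    exact ⟨c.toNat, by rw [hc]; exact_mod_cast Int.toNat_of_nonneg (by exact_mod_cast hc0)⟩
  choose! c hc using hcoeff
  have hcoord : ∀ x : Cube n, ∑ v ∈ vertexSet Δ, c v * h v x = (x : Fin n → ℝ) k := by
    intro x
    conv_rhs => rw [← hH.sum_smul_eq hW x]
    rw [Finset.sum_apply]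
    refine Finset.sum_congr rfl fun v hv => ?_
    rw [hc v hv, hone v hv, Pi.smul_apply, smul_eq_mul]
    push_cast
    ring
  convert hB.sum_nsmul_mem c hhB fun x => (hcoord x).le.trans (x.2 k).2 using 2 with x
  exact (hcoord x).symm

theorem mem_mvGen_hatSet_of_isMcNaughton {n : ℕ} {Δ : Finset (Finset (Fin n → ℝ))}
    {a : (Fin n → ℝ) → ℕ} {h : (Fin n → ℝ) → Cube n → ℝ} (hW : IsWeighted Δ a)
    (hH : IsHatFamily Δ a h) (hone : ∀ v ∈ vertexSet Δ, a v = 1) {f : Cube n → ℝ}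
    (hf : IsMcNaughton f) : f ∈ mvGen (hatSet Δ h) := by
  rintro B ⟨hBclosed, hhats⟩
  have hB := hBclosed.isMVSubalgebra_inter
  have hhB : ∀ v ∈ vertexSet Δ, h v ∈ B ∩ {f | ∀ x, 0 ≤ f x ∧ f x ≤ 1} :=
    fun v hv => ⟨hhats ⟨v, hv, rfl⟩, (hH v hv).1⟩
  exact (hB.mem_of_isMcNaughton (hB.coord_mem_of_hats_mem hW hH hone hhB) hf).1

theorem basic_generating_set_has_nontrivial_weight_general (n : ℕ) (A : Set (Cube n → ℝ))
    (hsub : A ⊆ McNn n) (hne : A ≠ McNn n) :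
    ∀ (Δ : Finset (Finset (Fin n → ℝ))) (a : (Fin n → ℝ) → ℕ)
      (h : (Fin n → ℝ) → Cube n → ℝ),
      IsWeighted Δ a → IsHatFamily Δ a h →
      (∀ v ∈ vertexSet Δ, IsMcNaughton (h v)) →
      A = mvGen (hatSet Δ h) →
      ∃ v ∈ vertexSet Δ, a v ≠ 1 := by
  intro Δ a h hW hH _ hgen
  by_contra! hone
  exact hne (hsub.antisymm fun f hf => hgen ▸ mem_mvGen_hatSet_of_isMcNaughton hW hH hone hf)

/-- If `A` is a finitely generated separating subalgebra of
`M([0,1]^n)` distinct from `M([0,1]^n)`, then every weighted triangulation whose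
basic set of hats generates `A` has some weight `a_j ≠ 1`. -/
theorem basic_generating_set_has_nontrivial_weight (n : ℕ) (A : Set (Cube n → ℝ))
    (hsub : A ⊆ McNn n) (hclosed : MVClosed A)
    (hfg : ∃ S : Set (Cube n → ℝ), S.Finite ∧ A = mvGen S)
    (hsep : Separates A) (hne : A ≠ McNn n) :
    ∀ (Δ : Finset (Finset (Fin n → ℝ))) (a : (Fin n → ℝ) → ℕ)
      (h : (Fin n → ℝ) → Cube n → ℝ),
      IsWeighted Δ a → IsHatFamily Δ a h →
      (∀ v ∈ vertexSet Δ, IsMcNaughton (h v)) →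
      A = mvGen (hatSet Δ h) →
      ∃ v ∈ vertexSet Δ, a v ≠ 1 :=
  basic_generating_set_has_nontrivial_weight_general n A hsub hne

end MVPaper
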